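/- For continuous f, v : [0,1] → ℝ, the dyadic quadratic variation at time 1 satisfies the Cesàro-mean formula [f,v]_{k+1}(1) = (1/2)[f,v]_k(1) + (1/2) Σ_m f_{km} v_{km}, and consequently [f,v]_{k+1}(1) = 2^{−(k+1)} Σ_{p≤k} Σ_m 2^p f_{pm} v_{pm}. -/

import Mathlib

noncomputable section
open Set

/-- The `k`-th dyadic quadratic covariation
`[f,v]_k(t) = ∑_{m=1}^{2^k} (f(t²_{km}∧t) - f(t⁰_{km}∧t))(v(t²_{km}∧t) - v(t⁰_{km}∧t))`. -/
def qvar (f v : ℝ → ℝ) (k : ℕ) (t : ℝ) : ℝ :=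
  ∑ m ∈ Finset.range (2 ^ k),
    (f (min (((m : ℝ) + 1) / 2 ^ k) t) - f (min ((m : ℝ) / 2 ^ k) t)) *
      (v (min (((m : ℝ) + 1) / 2 ^ k) t) - v (min ((m : ℝ) / 2 ^ k) t))

/-- The (rescaled) Schauder coefficient `f_{pm} = 2f(t¹_{pm}) - f(t⁰_{pm}) - f(t²_{pm})`,
with the conventions `f_{00} = f(1) - f(0)` and `f_{p0} = 0` for `p ≥ 1`. -/
def coeff (f : ℝ → ℝ) (p m : ℕ) : ℝ :=
  if m = 0 then (if p = 0 then f 1 - f 0 else 0)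
  else 2 * f ((2 * (m : ℝ) - 1) / 2 ^ (p + 1)) - f (((m : ℝ) - 1) / 2 ^ p) - f ((m : ℝ) / 2 ^ p)

/-
Halving the mesh splits each dyadic interval `[t⁰, t²]` at its midpoint `t¹`. With increments
`x = f t¹ - f t⁰`, `x' = f t² - f t¹` (and `y`, `y'` for `v`), polarization gives
`x y + x' y' = ½ (x + x')(y + y') + ½ (x - x')(y - y')`, where `x + x'` is the increment over
the coarse interval and `x' - x` is minus the Schauder coefficient. Summing gives the recursion
`[f,v]_{k+1} = ½ [f,v]_k + ½ ∑_m f_{km} v_{km}`, and unrolling it from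
`[f,v]_0(1) = f_{00} v_{00}` gives the Cesàro formula.
-/

lemma Finset.sum_range_two_mul {M : Type*} [AddCommMonoid M] (n : ℕ) (g : ℕ → M) :
    ∑ i ∈ range (2 * n), g i = ∑ i ∈ range n, (g (2 * i) + g (2 * i + 1)) := by
  induction n with
  | zero => simp
  | succ n ih =>
    rw [Nat.mul_succ, sum_range_succ, sum_range_succ, sum_range_succ, ih, add_assoc]

lemma Finset.sum_Icc_one_eq_sum_range {M : Type*} [AddCommMonoid M] (n : ℕ) (g : ℕ → M) :
    ∑ i ∈ Icc 1 n, g i = ∑ i ∈ range n, g (i + 1) := by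
  rw [← Ico_add_one_right_eq_Icc, sum_Ico_eq_sum_range]
  simp [add_comm]

lemma qvar_one (f v : ℝ → ℝ) (k : ℕ) :
    qvar f v k 1 = ∑ m ∈ Finset.range (2 ^ k),
      (f (((m : ℝ) + 1) / 2 ^ k) - f ((m : ℝ) / 2 ^ k)) *
        (v (((m : ℝ) + 1) / 2 ^ k) - v ((m : ℝ) / 2 ^ k)) := by
  refine Finset.sum_congr rfl fun m hm => ?_
  have hm : (m : ℝ) + 1 ≤ 2 ^ k := by exact_mod_cast Finset.mem_range.mp hm
  have h1 : ((m : ℝ) + 1) / 2 ^ k ≤ 1 := (div_le_one (by positivity)).2 hm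
  have h0 : (m : ℝ) / 2 ^ k ≤ 1 := (div_le_one (by positivity)).2 (by linarith)
  rw [min_eq_left h1, min_eq_left h0]

lemma qvar_zero_one (f v : ℝ → ℝ) : qvar f v 0 1 = (f 1 - f 0) * (v 1 - v 0) := by
  simp [qvar]

lemma coeff_succ (f : ℝ → ℝ) (p m : ℕ) :
    coeff f p (m + 1) = 2 * f ((2 * (m : ℝ) + 1) / 2 ^ (p + 1)) - f ((m : ℝ) / 2 ^ p)
      - f (((m : ℝ) + 1) / 2 ^ p) := by
  simp only [coeff, Nat.succ_ne_zero, if_false, Nat.cast_succ]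
  ring_nf

lemma sum_range_coeff_mul_coeff (f v : ℝ → ℝ) (p : ℕ) :
    ∑ m ∈ Finset.range (2 ^ p + 1), coeff f p m * coeff v p m =
      (if p = 0 then (f 1 - f 0) * (v 1 - v 0) else 0) +
        ∑ m ∈ Finset.Icc 1 (2 ^ p), coeff f p m * coeff v p m := by
  rw [Finset.sum_range_succ', Finset.sum_Icc_one_eq_sum_range, add_comm]
  split_ifs <;> simp [coeff, *]

lemma qvar_succ_one (f v : ℝ → ℝ) (k : ℕ) :
    qvar f v (k + 1) 1 = (1 / 2) * qvar f v k 1 +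
      (1 / 2) * ∑ m ∈ Finset.Icc 1 (2 ^ k), coeff f k m * coeff v k m := by
  rw [qvar_one, qvar_one, pow_succ', Finset.sum_range_two_mul, Finset.sum_Icc_one_eq_sum_range,
    Finset.mul_sum, Finset.mul_sum, ← Finset.sum_add_distrib]
  refine Finset.sum_congr rfl fun m _ => ?_
  have hleft : ((2 * m : ℕ) : ℝ) / 2 ^ (k + 1) = (m : ℝ) / 2 ^ k := by
    push_cast; rw [pow_succ]; field_simp
  have hmid : (((2 * m : ℕ) : ℝ) + 1) / 2 ^ (k + 1) = (2 * (m : ℝ) + 1) / 2 ^ (k + 1) := by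
    push_cast; ring
  have hright : (((2 * m + 1 : ℕ) : ℝ) + 1) / 2 ^ (k + 1) = ((m : ℝ) + 1) / 2 ^ k := by
    push_cast; rw [pow_succ]; field_simp; ring
  rw [hleft, hmid, hright, coeff_succ, coeff_succ, Nat.cast_succ, hmid]
  ring

lemma two_pow_mul_eq_of_halving {a s : ℕ → ℝ} (h : ∀ k, a (k + 1) = (1 / 2) * a k + (1 / 2) * s k)
    (k : ℕ) : 2 ^ k * a k = a 0 + ∑ p ∈ Finset.range k, 2 ^ p * s p := by
  induction k with
  | zero => simp
  | succ k ih => rw [Finset.sum_range_succ, ← add_assoc, ← ih, h, pow_succ]; ring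

theorem qvar_cesaro_general (f v : ℝ → ℝ) (k : ℕ) :
    qvar f v (k + 1) 1
        = (1 / 2) * qvar f v k 1 +
          (1 / 2) * ∑ m ∈ Finset.Icc 1 (2 ^ k), coeff f k m * coeff v k m ∧
    qvar f v (k + 1) 1
        = (2 : ℝ) ^ (-(k + 1 : ℤ)) *
          ∑ p ∈ Finset.range (k + 1), ∑ m ∈ Finset.range (2 ^ p + 1),
            (2 : ℝ) ^ p * coeff f p m * coeff v p m := by
  refine ⟨qvar_succ_one f v k, ?_⟩
  have hunroll := two_pow_mul_eq_of_halving (a := fun k => qvar f v k 1) (qvar_succ_one f v) (k + 1)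
  have hinner (p : ℕ) : ∑ m ∈ Finset.range (2 ^ p + 1), (2 : ℝ) ^ p * coeff f p m * coeff v p m =
      2 ^ p * ((if p = 0 then qvar f v 0 1 else 0) +
        ∑ m ∈ Finset.Icc 1 (2 ^ p), coeff f p m * coeff v p m) := by
    simp only [mul_assoc, ← Finset.mul_sum, sum_range_coeff_mul_coeff, qvar_zero_one]
  have hpow : (2 : ℝ) ^ (-(k + 1 : ℤ)) = ((2 : ℝ) ^ (k + 1))⁻¹ := by
    rw [zpow_neg]; norm_cast
  rw [hpow, eq_inv_mul_iff_mul_eq₀ (by positivity), hunroll]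
  simp only [hinner, mul_add, Finset.sum_add_distrib]
  simp

/-- Cesàro-mean formula for the dyadic quadratic covariation at time `1`:
`[f,v]_{k+1}(1) = (1/2)[f,v]_k(1) + (1/2)∑_m f_{km}v_{km}`, hence
`[f,v]_{k+1}(1) = 2^{-(k+1)} ∑_{p≤k} ∑_m 2^p f_{pm} v_{pm}`. -/
theorem qvar_cesaro (f v : ℝ → ℝ)
    (hf : ContinuousOn f (Icc 0 1)) (hv : ContinuousOn v (Icc 0 1)) (k : ℕ) :
    qvar f v (k + 1) 1
        = (1 / 2) * qvar f v k 1 +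
          (1 / 2) * ∑ m ∈ Finset.Icc 1 (2 ^ k), coeff f k m * coeff v k m ∧
    qvar f v (k + 1) 1
        = (2 : ℝ) ^ (-(k + 1 : ℤ)) *
          ∑ p ∈ Finset.range (k + 1), ∑ m ∈ Finset.range (2 ^ p + 1),
            (2 : ℝ) ^ p * coeff f p m * coeff v p m :=
  qvar_cesaro_general f v k
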